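/- For the three-firm relative-profit Cournot game, the first-order conditions ∂ψ_A/∂x_A = 0, ∂ψ_B/∂x_B = 0, ∂ψ_C/∂x_C = 0 form a linear system with a unique solution, and under c_A = c_B that solution has x_A = x_B. -/
import Mathlib


/-- Relative profits in the Cournot game, with c_A = c_B. -/
noncomputable def psiA (a b cA cC xA xB xC : ℝ) : ℝ :=
  (a - xA - b * xB - b * xC - cA) * xA -
    ((a - xB - b * xA - b * xC - cA) * xB + (a - xC - b * xA - b * xB - cC) * xC) / 2

noncomputable def psiB (a b cA cC xA xB xC : ℝ) : ℝ :=
  (a - xB - b * xA - b * xC - cA) * xB -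
    ((a - xA - b * xB - b * xC - cA) * xA + (a - xC - b * xA - b * xB - cC) * xC) / 2

noncomputable def psiC (a b cA cC xA xB xC : ℝ) : ℝ :=
  (a - xC - b * xA - b * xB - cC) * xC -
    ((a - xA - b * xB - b * xC - cA) * xA + (a - xB - b * xA - b * xC - cA) * xB) / 2

/-- First-order conditions of the relative-profit Cournot game. -/
def CournotFOC (a b cA cC : ℝ) (v : ℝ × ℝ × ℝ) : Prop :=
  deriv (fun x => psiA a b cA cC x v.2.1 v.2.2) v.1 = 0 ∧
  deriv (fun y => psiB a b cA cC v.1 y v.2.2) v.2.1 = 0 ∧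
  deriv (fun z => psiC a b cA cC v.1 v.2.1 z) v.2.2 = 0

lemma deriv_quadratic (c0 c1 c2 x : ℝ) :
    deriv (fun t : ℝ => c0 + c1 * t + c2 * t ^ 2) x = c1 + 2 * c2 * x := by
  have H : HasDerivAt (fun t : ℝ => c0 + c1 * t + c2 * t ^ 2)
      (0 + c1 * 1 + c2 * (↑2 * x ^ (2 - 1))) x :=
    ((hasDerivAt_const x c0).add ((hasDerivAt_id x).const_mul c1)).add
      ((hasDerivAt_pow 2 x).const_mul c2)
  rw [H.deriv]; push_cast; ring

lemma derivA (a b cA cC xB xC x : ℝ) :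
    deriv (fun t => psiA a b cA cC t xB xC) x
      = a - cA - 2 * x - (b / 2) * (xB + xC) := by
  have h : (fun t => psiA a b cA cC t xB xC)
      = fun t : ℝ => (-((a - xB - b * xC - cA) * xB + (a - xC - b * xB - cC) * xC) / 2)
        + (a - cA - (b / 2) * (xB + xC)) * t + (-1) * t ^ 2 := by
    funext t; simp only [psiA]; ring
  rw [h, deriv_quadratic]; ring

lemma derivB (a b cA cC xA xC y : ℝ) :
    deriv (fun t => psiB a b cA cC xA t xC) y
      = a - cA - 2 * y - (b / 2) * (xA + xC) := by
  have h : (fun t => psiB a b cA cC xA t xC)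
      = fun t : ℝ => (-((a - xA - b * xC - cA) * xA + (a - xC - b * xA - cC) * xC) / 2)
        + (a - cA - (b / 2) * (xA + xC)) * t + (-1) * t ^ 2 := by
    funext t; simp only [psiB]; ring
  rw [h, deriv_quadratic]; ring

lemma derivC (a b cA cC xA xB z : ℝ) :
    deriv (fun t => psiC a b cA cC xA xB t) z
      = a - cC - 2 * z - (b / 2) * (xA + xB) := by
  have h : (fun t => psiC a b cA cC xA xB t)
      = fun t : ℝ => (-((a - xA - b * xB - cA) * xA + (a - xB - b * xA - cA) * xB) / 2)
        + (a - cC - (b / 2) * (xA + xB)) * t + (-1) * t ^ 2 := by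
    funext t; simp only [psiC]; ring
  rw [h, deriv_quadratic]; ring

lemma foc_iff (a b cA cC : ℝ) (v : ℝ × ℝ × ℝ) :
    CournotFOC a b cA cC v ↔
      (2 * v.1 + (b / 2) * (v.2.1 + v.2.2) = a - cA ∧
       2 * v.2.1 + (b / 2) * (v.1 + v.2.2) = a - cA ∧
       2 * v.2.2 + (b / 2) * (v.1 + v.2.1) = a - cC) := by
  unfold CournotFOC
  rw [derivA, derivB, derivC]
  constructor <;> rintro ⟨h1, h2, h3⟩ <;> refine ⟨by linarith, by linarith, by linarith⟩

/-- The first-order conditions form a linear system with a unique solution, and (given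
c_A = c_B) that solution satisfies x_A = x_B. -/
theorem cournot_foc_unique_and_symmetric (a b cA cC : ℝ) (hb0 : 0 < b) (hb1 : b < 1) :
    (∃! v : ℝ × ℝ × ℝ, CournotFOC a b cA cC v) ∧
    (∀ v : ℝ × ℝ × ℝ, CournotFOC a b cA cC v → v.1 = v.2.1) := by
  set D : ℝ := 4 + b - b ^ 2 / 2 with hD
  have hDpos : 0 < D := by rw [hD]; nlinarith
  have hDne : D ≠ 0 := ne_of_gt hDpos
  set x0 : ℝ := (2 * (a - cA) - (b / 2) * (a - cC)) / D with hx0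
  set z0 : ℝ := ((2 + b / 2) * (a - cC) - b * (a - cA)) / D with hz0
  -- symmetry: any solution has x = y
  have hsym : ∀ v : ℝ × ℝ × ℝ, CournotFOC a b cA cC v → v.1 = v.2.1 := by
    intro v hv
    rw [foc_iff] at hv
    obtain ⟨e1, e2, e3⟩ := hv
    have h : (2 - b / 2) * (v.1 - v.2.1) = 0 := by linear_combination e1 - e2
    have : (2 : ℝ) - b / 2 ≠ 0 := by nlinarith
    have := mul_eq_zero.mp h
    rcases this with h' | h'
    · exact absurd h' this
    · linarith [sub_eq_zero.mp h']
  refine ⟨⟨(x0, x0, z0), ?_, ?_⟩, hsym⟩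
  · show CournotFOC a b cA cC (x0, x0, z0)
    rw [foc_iff]
    have hx1 : D * x0 = 2 * (a - cA) - (b / 2) * (a - cC) := by
      rw [hx0, mul_comm, div_mul_cancel₀ _ hDne]
    have hz1 : D * z0 = (2 + b / 2) * (a - cC) - b * (a - cA) := by
      rw [hz0, mul_comm, div_mul_cancel₀ _ hDne]
    rw [hD] at hx1 hz1
    refine ⟨?_, ?_, ?_⟩
    · exact mul_left_cancel₀ hDne (by rw [hD]; linear_combination (2 + b / 2) * hx1 + (b / 2) * hz1)
    · exact mul_left_cancel₀ hDne (by rw [hD]; linear_combination (2 + b / 2) * hx1 + (b / 2) * hz1)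
    · exact mul_left_cancel₀ hDne (by rw [hD]; linear_combination b * hx1 + 2 * hz1)
  · rintro ⟨x, y, z⟩ hv
    have hxy : x = y := hsym _ hv
    rw [foc_iff] at hv
    obtain ⟨e1, e2, e3⟩ := hv
    simp only at e1 e2 e3
    subst hxy
    have h1 : D * x = 2 * (a - cA) - (b / 2) * (a - cC) := by
      rw [hD]; linear_combination 2 * e1 - (b / 2) * e3
    have h2 : D * z = (2 + b / 2) * (a - cC) - b * (a - cA) := by
      rw [hD]; linear_combination (2 + b / 2) * e3 - b * e1
    have hx : x = x0 := by rw [hx0, eq_div_iff hDne]; linear_combination h1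
    have hz : z = z0 := by rw [hz0, eq_div_iff hDne]; linear_combination h2
    simp [hx, hz]
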